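/- The function g is twice differentiable on ℝ, and for every z ∈ ℝ its second derivative equals g''(z) = [ (∫_a^b exp(z·E(t)) dt)·(∫_a^b E(t)²·exp(z·E(t)) dt) − (∫_a^b E(t)·exp(z·E(t)) dt)² ] / (∫_a^b exp(z·E(t)) dt)². -/

import Mathlib

/-!
Up to the additive constant `log (1 / (b - a))`, `g` is the cumulant generating function
`z ↦ log ∫ exp (z E)` of `E` under Lebesgue measure on `(a, b]`. As `E` is bounded there,
`exp (z E)` is integrable for every `z`, so the moment generating function `M` is analytic on `ℝ`
with `M' = ∫ E exp (z E)` and `M'' = ∫ E² exp (z E)`, and `(log M)'' = (M M'' - M'²) / M²`.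
-/

open MeasureTheory ProbabilityTheory Real Set

namespace ProbabilityTheory

variable {Ω : Type*} {m : MeasurableSpace Ω} {X : Ω → ℝ} {μ : Measure Ω} {v : ℝ}

lemma iteratedDeriv_two_cgf_eq_div_sq [NeZero μ] (h : v ∈ interior (integrableExpSet X μ)) :
    iteratedDeriv 2 (cgf X μ) v =
      (mgf X μ v * μ[fun ω ↦ X ω ^ 2 * exp (v * X ω)] - μ[fun ω ↦ X ω * exp (v * X ω)] ^ 2)
        / mgf X μ v ^ 2 := by
  have hM : mgf X μ v ≠ 0 :=
    (mgf_pos' (NeZero.ne μ) (interior_subset (s := integrableExpSet X μ) h)).ne'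
  have div_sub_div_sq : ∀ A B M : ℝ, M ≠ 0 → A / M - (B / M) ^ 2 = (M * A - B ^ 2) / M ^ 2 :=
    fun A B M hM ↦ by field_simp
  rw [iteratedDeriv_two_cgf h, deriv_cgf h, div_sub_div_sq _ _ _ hM]

end ProbabilityTheory

lemma integrableExpSet_restrict_Ioc_eq_univ {a b : ℝ} {E : ℝ → ℝ}
    (hE : ContinuousOn E (Icc a b)) : integrableExpSet E (volume.restrict (Ioc a b)) = univ :=
  eq_univ_of_forall fun _ ↦
    ((continuous_exp.comp_continuousOn (continuousOn_const.mul hE)).integrableOn_Icc).mono_set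
      Ioc_subset_Icc_self

/-- Context: `a < b`, `E` continuous on `[a,b]`,
`g z = log( (1/(b-a)) * ∫_a^b exp(z * E t) dt )`.
Statement: `g` is twice differentiable on `ℝ` and
`g''(z) = [ (∫ exp(zE)) (∫ E² exp(zE)) − (∫ E exp(zE))² ] / (∫ exp(zE))²`. -/
theorem stmt_1 (a b : ℝ) (hab : a < b) (E : ℝ → ℝ)
    (hE : ContinuousOn E (Set.Icc a b))
    (g : ℝ → ℝ)
    (hg : ∀ z : ℝ, g z = Real.log ((1 / (b - a)) * ∫ t in a..b, Real.exp (z * E t))) :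
    Differentiable ℝ g ∧ Differentiable ℝ (deriv g) ∧
      ∀ z : ℝ, deriv (deriv g) z =
        ((∫ t in a..b, Real.exp (z * E t)) * (∫ t in a..b, (E t) ^ 2 * Real.exp (z * E t))
            - (∫ t in a..b, E t * Real.exp (z * E t)) ^ 2)
          / (∫ t in a..b, Real.exp (z * E t)) ^ 2 := by
  set μ := volume.restrict (Ioc a b)
  have : NeZero μ := ⟨by simp [μ, hab]⟩
  have hint : ∀ f : ℝ → ℝ, ∫ t in a..b, f t = μ[f] := fun f ↦ intervalIntegral.integral_of_le hab.le
  have hset : integrableExpSet E μ = univ := integrableExpSet_restrict_Ioc_eq_univ hE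
  have hinterior : interior (integrableExpSet E μ) = univ := by rw [hset, interior_univ]
  have hcgf : AnalyticOnNhd ℝ (cgf E μ) univ := hinterior ▸ analyticOnNhd_cgf
  have hg_eq : g = fun z ↦ log (1 / (b - a)) + cgf E μ z := by
    funext z
    have hz : z ∈ integrableExpSet E μ := hset ▸ mem_univ z
    rw [hg, hint, ← mgf, cgf,
      log_mul (by simp [sub_ne_zero.2 hab.ne']) (mgf_pos' (NeZero.ne μ) hz).ne']
  have hderiv : deriv g = deriv (cgf E μ) := by
    rw [hg_eq]; funext z; exact deriv_const_add _
  refine ⟨?_, ?_, fun z ↦ ?_⟩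
  · rw [hg_eq]; exact fun z ↦ ((hcgf z trivial).differentiableAt).const_add _
  · rw [hderiv]; exact fun z ↦ (hcgf z trivial).deriv.differentiableAt
  · rw [hderiv, ← iteratedDeriv_one (f := cgf E μ), ← iteratedDeriv_succ,
      iteratedDeriv_two_cgf_eq_div_sq (hinterior ▸ mem_univ z), mgf, hint, hint, hint]
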